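/- Let f(t) = t^k, f_i = f([i]_q/[n]_q). Then Δ_q^r f_0 = ([r]_q! · q^{r(r-1)/2} / [n]_q^k) · S_q(k, r), where S_q is the q-Stirling number of the second kind. -/

import Mathlib

open Finset Filter Topology

/-- The q-integer `[m]_q = 1 + q + ... + q^{m-1}`, with `[0]_q = 0`. -/
noncomputable def qInt (q : ℝ) (m : ℕ) : ℝ := ∑ i ∈ Finset.range m, q ^ i

/-- The q-factorial `[n]_q! = [1]_q [2]_q ⋯ [n]_q`. -/
noncomputable def qFact (q : ℝ) (n : ℕ) : ℝ := ∏ i ∈ Finset.range n, qInt q (i + 1)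

/-- The q-binomial coefficient `[n]_q!/([k]_q! [n-k]_q!)` (zero if `k > n`). -/
noncomputable def qBinom (q : ℝ) (n k : ℕ) : ℝ :=
  if k ≤ n then qFact q n / (qFact q k * qFact q (n - k)) else 0

/-- The q-Stirling number of the second kind. -/
noncomputable def qStirling (q : ℝ) (k r : ℕ) : ℝ :=
  (1 / (qFact q r * q ^ (r * (r - 1) / 2))) *
    ∑ i ∈ Finset.range (r + 1),
      (-1 : ℝ) ^ i * q ^ (i * (i - 1) / 2) * qBinom q r i * (qInt q (r - i)) ^ k

/-- The q-forward difference operator on sequences: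
`Δ_q^0 f_i = f_i`, `Δ_q^{r+1} f_i = Δ_q^r f_{i+1} - q^r Δ_q^r f_i`. -/
noncomputable def qDiff (q : ℝ) : ℕ → (ℕ → ℝ) → ℕ → ℝ
  | 0, f, i => f i
  | r + 1, f, i => qDiff q r f (i + 1) - q ^ r * qDiff q r f i

/-- The eigenvalues `λ_{k,q}^{(α,n)}` of the (α,q)-Bernstein operator. -/
noncomputable def lamEig (q α : ℝ) (n k : ℕ) : ℝ :=
  q ^ (k * (k - 1) / 2) * qFact q (n - 2) / (qFact q (n - k) * (qInt q n) ^ k) *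
    ((1 - α) * qInt q (n - k) * qInt q (n - 1 + k) + α * qInt q n * qInt q (n - 1))

/-- The coefficients `a_{n,q}(r,k)` of `T_{n,q,α}(t^k; x) = Σ_r a_{n,q}(r,k) x^r`. -/
noncomputable def aCoef (q α : ℝ) (n r k : ℕ) : ℝ :=
  q ^ (r * (r - 1) / 2) * qFact q (n - 2) / ((qInt q n) ^ k * qFact q (n - r)) *
    ((1 - α) * qInt q (n - r) *
        (qInt q (n + r - 1) * qStirling q (k + 1) (r + 1) -
          qInt q (r + 1) * qInt q (n - 1) * qStirling q k (r + 1)) +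
      α * qInt q n * qInt q (n - 1) * qStirling q k r)

/-- The (α,q)-Bernstein operator, via its forward-difference representation
`T_{n,q,α}(f;x) = Σ_{r=0}^n ((1-α) C_q(n-1,r) Δ_q^r g_0 + α C_q(n,r) Δ_q^r f_0) x^r`,
where `f_i = f([i]_q/[n]_q)` and
`g_i = (1 - q^{n-i-1}[i]_q/[n-1]_q) f_i + (q^{n-i-1}[i]_q/[n-1]_q) f_{i+1}`. -/
noncomputable def Talpha (q α : ℝ) (n : ℕ) (f : ℝ → ℝ) (x : ℝ) : ℝ :=
  let fs : ℕ → ℝ := fun i => f (qInt q i / qInt q n)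
  let gs : ℕ → ℝ := fun i =>
    (1 - q ^ (n - i - 1) * qInt q i / qInt q (n - 1)) * fs i +
      (q ^ (n - i - 1) * qInt q i / qInt q (n - 1)) * fs (i + 1)
  ∑ r ∈ Finset.range (n + 1),
    ((1 - α) * qBinom q (n - 1) r * qDiff q r gs 0 + α * qBinom q n r * qDiff q r fs 0) * x ^ r

/-!
Unwinding the recursion with the q-Pascal rule gives the q-binomial expansion
`Δ_q^r f_i = Σ_j (-1)^j q^{j(j-1)/2} C_q(r,j) f_{i+r-j}`. For `f_m = ([m]_q/[n]_q)^k` and `i = 0`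
this is, term by term, `[n]_q^{-k}` times the alternating sum defining `S_q(k, r)`.
-/

section qCalculus

variable {q : ℝ}

lemma qInt_pos (hq : 0 < q) {m : ℕ} (hm : 1 ≤ m) : 0 < qInt q m :=
  sum_pos (fun i _ => pow_pos hq i) ⟨0, mem_range.mpr hm⟩

lemma qInt_add (a b : ℕ) : qInt q (a + b) = qInt q a + q ^ a * qInt q b := by
  simp only [qInt, sum_range_add, mul_sum, pow_add]

lemma qFact_zero : qFact q 0 = 1 := prod_range_zero _

lemma qFact_succ (n : ℕ) : qFact q (n + 1) = qFact q n * qInt q (n + 1) :=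
  prod_range_succ _ _

lemma qFact_pos (hq : 0 < q) (n : ℕ) : 0 < qFact q n :=
  prod_pos fun _ _ => qInt_pos hq (Nat.le_add_left 1 _)

lemma qBinom_zero_right (hq : 0 < q) (n : ℕ) : qBinom q n 0 = 1 := by
  rw [qBinom, if_pos n.zero_le, qFact_zero, one_mul, Nat.sub_zero, div_self (qFact_pos hq n).ne']

lemma qBinom_self (hq : 0 < q) (n : ℕ) : qBinom q n n = 1 := by
  rw [qBinom, if_pos le_rfl, Nat.sub_self, qFact_zero, mul_one, div_self (qFact_pos hq n).ne']

lemma qBinom_of_lt {n k : ℕ} (h : n < k) : qBinom q n k = 0 :=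
  if_neg h.not_ge

lemma qBinom_succ_succ (hq : 0 < q) {r j : ℕ} (hj : j ≤ r) :
    qBinom q (r + 1) (j + 1) = qBinom q r (j + 1) + q ^ (r - j) * qBinom q r j := by
  obtain rfl | hlt := hj.eq_or_lt
  · rw [qBinom_self hq, qBinom_self hq, qBinom_of_lt j.lt_succ_self, Nat.sub_self]
    ring
  obtain ⟨s, rfl⟩ : ∃ s, r = j + 1 + s := ⟨r - (j + 1), by omega⟩
  have hsplit : qInt q (j + 1 + s + 1) = qInt q (s + 1) + q ^ (s + 1) * qInt q (j + 1) := by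
    rw [show j + 1 + s + 1 = (s + 1) + (j + 1) by ring, qInt_add]
  rw [qBinom, qBinom, qBinom, if_pos (by omega), if_pos (by omega), if_pos (by omega),
    show j + 1 + s + 1 - (j + 1) = s + 1 by omega, show j + 1 + s - (j + 1) = s by omega,
    show j + 1 + s - j = s + 1 by omega, qFact_succ (j + 1 + s), qFact_succ j, qFact_succ s]
  have := (qFact_pos hq (j + 1 + s)).ne'
  have := (qFact_pos hq j).ne'
  have := (qFact_pos hq s).ne'
  have := (qInt_pos hq (Nat.le_add_left 1 j)).ne'
  have := (qInt_pos hq (Nat.le_add_left 1 s)).ne'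
  field_simp
  rw [hsplit]
  ring

end qCalculus

/-- The coefficient of `f_{i+r-j}` in the expansion of `Δ_q^r f_i`. -/
noncomputable def qDiffCoeff (q : ℝ) (r j : ℕ) : ℝ :=
  (-1) ^ j * q ^ (j * (j - 1) / 2) * qBinom q r j

section qDiffCoeff

variable {q : ℝ}

lemma qDiffCoeff_zero_right (hq : 0 < q) (r : ℕ) : qDiffCoeff q r 0 = 1 := by
  simp [qDiffCoeff, qBinom_zero_right hq]

lemma qDiffCoeff_of_lt {r j : ℕ} (h : r < j) : qDiffCoeff q r j = 0 := by
  rw [qDiffCoeff, qBinom_of_lt h, mul_zero]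

lemma qDiffCoeff_succ_succ (hq : 0 < q) {r j : ℕ} (hj : j ≤ r) :
    qDiffCoeff q (r + 1) (j + 1) = qDiffCoeff q r (j + 1) - q ^ r * qDiffCoeff q r j := by
  have hexp : q ^ ((j + 1) * (j + 1 - 1) / 2) * q ^ (r - j) = q ^ r * q ^ (j * (j - 1) / 2) := by
    rw [← pow_add, ← pow_add, Nat.triangle_succ]
    congr 1
    omega
  simp only [qDiffCoeff, qBinom_succ_succ hq hj]
  linear_combination (-(-1 : ℝ) ^ j * qBinom q r j) * hexp

theorem qDiff_eq_sum_antidiagonal (hq : 0 < q) (r : ℕ) (f : ℕ → ℝ) (i : ℕ) :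
    qDiff q r f i = ∑ p ∈ antidiagonal r, qDiffCoeff q r p.1 * f (i + p.2) := by
  induction r generalizing i with
  | zero => simp [qDiff, qDiffCoeff_zero_right hq]
  | succ r ih =>
    -- the two splittings of `∑_{a+b=r+1} qDiffCoeff q r a * f (i + b)`
    have hshift : ∑ p ∈ antidiagonal r, qDiffCoeff q r p.1 * f (i + 1 + p.2) =
        f (i + (r + 1)) + ∑ p ∈ antidiagonal r, qDiffCoeff q r (p.1 + 1) * f (i + p.2) := by
      have h := Nat.sum_antidiagonal_succ (n := r) (f := fun p => qDiffCoeff q r p.1 * f (i + p.2))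
      rw [Nat.sum_antidiagonal_succ', qDiffCoeff_of_lt r.lt_succ_self,
        qDiffCoeff_zero_right hq] at h
      simpa only [zero_mul, zero_add, one_mul, add_zero, add_assoc, add_comm 1] using h
    have hpascal : ∀ p ∈ antidiagonal r, qDiffCoeff q (r + 1) (p.1 + 1) * f (i + p.2) =
        qDiffCoeff q r (p.1 + 1) * f (i + p.2) - q ^ r * (qDiffCoeff q r p.1 * f (i + p.2)) :=
      fun p hp => by
        rw [qDiffCoeff_succ_succ hq (HasAntidiagonal.antidiagonal.fst_le hp)]
        ring
    rw [qDiff, ih, ih, hshift, Nat.sum_antidiagonal_succ, qDiffCoeff_zero_right hq,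
      sum_congr rfl hpascal, sum_sub_distrib, mul_sum]
    ring

end qDiffCoeff

theorem qDiff_pow_zero_general (q : ℝ) (hq : 0 < q) (n k r : ℕ) :
    qDiff q r (fun m => (qInt q m / qInt q n) ^ k) 0 =
      qFact q r * q ^ (r * (r - 1) / 2) / (qInt q n) ^ k * qStirling q k r := by
  have hnorm : qFact q r * q ^ (r * (r - 1) / 2) ≠ 0 :=
    (mul_pos (qFact_pos hq r) (pow_pos hq _)).ne'
  rw [qDiff_eq_sum_antidiagonal hq, Nat.sum_antidiagonal_eq_sum_range_succ_mk, qStirling,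
    ← mul_assoc, div_mul_eq_mul_div, mul_one_div_cancel hnorm, mul_sum]
  refine sum_congr rfl fun j _ => ?_
  rw [qDiffCoeff, zero_add, div_pow]
  ring

theorem qDiff_pow_zero (q : ℝ) (hq : 0 < q) (n k r : ℕ) (hn : 1 ≤ n) (hr : r ≤ k) :
    qDiff q r (fun m => (qInt q m / qInt q n) ^ k) 0 =
      qFact q r * q ^ (r * (r - 1) / 2) / (qInt q n) ^ k * qStirling q k r :=
  qDiff_pow_zero_general q hq n k r
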